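/- For any step size τ > 0 and complex number z with Re(z) > 0, if g : [0,∞) → ℂ is the continuous piecewise linear function with nodes g(nτ) = g_n for n ≥ 0 and g_0 = 0, and the sequence (g_n) is bounded, then the Laplace transform of g satisfies ∫₀^∞ g(t) e^{-zt} dt = ((e^{-τz} + e^{τz} - 2)/(z² τ)) · ∑_{n=0}^∞ g_n e^{-nτz}. -/

import Mathlib

open MeasureTheory Set Complex

/-!
Cut `(0, ∞)` into the cells `(nτ, (n+1)τ]`. On each cell `g` is affine, so its Laplace integral
is explicit: `α gₙ ζⁿ + β gₙ₊₁ ζⁿ⁺¹` with `ζ = e^{-τz}` and coefficients `α`, `β` independent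
of `n`. The bounded `gₙ` make both the integral and the series absolutely convergent, and since
`g₀ = 0` the two shifted series coincide, leaving `(α + β) ∑ gₙ ζⁿ`; finally
`α + β = (e^{-τz} + e^{τz} - 2) / (τ z²)`.
-/

theorem iUnion_Ioc_nat_mul {τ : ℝ} (hτ : 0 < τ) :
    ⋃ n : ℕ, Ioc (n * τ) ((n + 1) * τ) = Ioi 0 := by
  have hunbdd : ¬BddAbove (range fun n : ℕ => (n : ℝ) * τ) :=
    Filter.not_bddAbove_of_tendsto_atTop
      (tendsto_natCast_atTop_atTop.atTop_mul_const hτ)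
  simpa using iUnion_Ioc_map_succ_eq_Ioi
    (fun n => Nat.mono_cast.mul_const hτ.le (Nat.zero_le n)) hunbdd

theorem pairwise_disjoint_Ioc_nat_mul {τ : ℝ} (hτ : 0 ≤ τ) :
    Pairwise (Function.onFun Disjoint fun n : ℕ => Ioc (n * τ) ((n + 1) * τ)) := by
  simpa using (Nat.mono_cast.mul_const hτ).pairwise_disjoint_on_Ioc_succ

theorem norm_add_smul_sub_le {E : Type*} [SeminormedAddCommGroup E] [NormedSpace ℝ E]
    {p q : E} {M : ℝ} (hp : ‖p‖ ≤ M) (hq : ‖q‖ ≤ M) {s : ℝ} (hs : s ∈ Icc 0 1) :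
    ‖p + s • (q - p)‖ ≤ M := by
  simpa using (convex_closedBall (0 : E) M).add_smul_sub_mem (by simpa using hp)
    (by simpa using hq) hs

theorem tsum_mul_add_mul_succ {R : Type*} [Ring R] [TopologicalSpace R] [IsTopologicalRing R]
    [T2Space R] {A : ℕ → R} (hA : Summable A) (h0 : A 0 = 0) (α β : R) :
    ∑' n, (α * A n + β * A (n + 1)) = (α + β) * ∑' n, A n := by
  have hshift : ∑' n, A (n + 1) = ∑' n, A n := by
    rw [hA.tsum_eq_zero_add, h0, zero_add]
  have hA' : Summable fun n => A (n + 1) := (summable_nat_add_iff 1).2 hA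
  rw [(hA.mul_left α).tsum_add (hA'.mul_left β), hA.tsum_mul_left, hA'.tsum_mul_left, hshift,
    add_mul]

theorem integral_affine_mul_cexp_neg {z : ℂ} (hz : z ≠ 0) {τ : ℝ} (hτ : τ ≠ 0) (a : ℝ)
    (p q : ℂ) :
    ∫ t in a..a + τ, (p + (q - p) * ((t - a) / τ)) * cexp (-(z * t)) =
      (1 / z - (1 - cexp (-(τ * z))) / (τ * z ^ 2)) * (p * cexp (-(z * a))) +
        ((cexp (τ * z) - 1) / (τ * z ^ 2) - 1 / z) * (q * cexp (-(z * (a + τ)))) := by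
  have hτ' : (τ : ℂ) ≠ 0 := ofReal_ne_zero.2 hτ
  set F : ℂ → ℂ := fun w => -((p + (q - p) * ((w - a) / τ)) / z + (q - p) / (τ * z ^ 2)) *
    cexp (-(z * w))
  have hF : ∀ t : ℝ, HasDerivAt (fun t : ℝ => F t)
      ((p + (q - p) * ((t - a) / τ)) * cexp (-(z * t))) t := by
    intro t
    have h := (((((((hasDerivAt_id (t : ℂ)).sub_const (a : ℂ)).div_const (τ : ℂ)).const_mul
      (q - p)).const_add p).div_const z).add_const ((q - p) / (τ * z ^ 2))).neg.mul
      (((hasDerivAt_id (t : ℂ)).const_mul z).neg.cexp)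
    refine (h.comp_ofReal).congr_deriv ?_
    simp only [Pi.neg_apply, id]
    field_simp
    ring
  have hcont : Continuous fun t : ℝ => (p + (q - p) * ((t - a) / τ)) * cexp (-(z * t)) := by
    fun_prop
  rw [intervalIntegral.integral_eq_sub_of_hasDerivAt (fun t _ => hF t)
    (hcont.intervalIntegrable _ _)]
  have hshift : cexp (-(z * (a + τ))) = cexp (-(τ * z)) * cexp (-(z * a)) := by
    rw [← Complex.exp_add]; congr 1; ring
  have hshift' : cexp (τ * z) * cexp (-(z * (a + τ))) = cexp (-(z * a)) := by
    rw [← Complex.exp_add]; congr 1; ring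
  simp only [F]
  push_cast
  set E₀ := cexp (-(z * a))
  set E₁ := cexp (-(z * (a + τ)))
  field_simp
  linear_combination p * hshift - q * hshift'

theorem summable_mul_cexp_neg_nat_mul {c : ℕ → ℂ} {M : ℝ} (hc : ∀ n, ‖c n‖ ≤ M) {w : ℂ}
    (hw : 0 < w.re) : Summable fun n : ℕ => c n * cexp (-(n * w)) := by
  have hr : ‖cexp (-w)‖ < 1 := by rw [norm_exp, neg_re, Real.exp_lt_one_iff]; linarith
  refine ((summable_geometric_of_lt_one (norm_nonneg _) hr).mul_left M).of_norm_bounded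
    fun n => ?_
  rw [← mul_neg, exp_nat_mul, norm_mul, norm_pow]
  exact mul_le_mul_of_nonneg_right (hc n) (by positivity)

def IsPiecewiseLinearInterpolant (τ : ℝ) (gs : ℕ → ℂ) (g : ℝ → ℂ) : Prop :=
  ∀ n : ℕ, ∀ t ∈ Icc ((n : ℝ) * τ) (((n : ℝ) + 1) * τ),
    g t = gs n + (gs (n + 1) - gs n) * ((t - (n : ℝ) * τ) / τ)

namespace IsPiecewiseLinearInterpolant

variable {τ : ℝ} {gs : ℕ → ℂ} {g : ℝ → ℂ}

theorem eq_add_smul (hg : IsPiecewiseLinearInterpolant τ gs g) {n : ℕ} {t : ℝ}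
    (ht : t ∈ Icc ((n : ℝ) * τ) (((n : ℝ) + 1) * τ)) :
    g t = gs n + ((t - n * τ) / τ) • (gs (n + 1) - gs n) := by
  rw [hg n t ht, real_smul, mul_comm]
  push_cast
  rfl

theorem norm_le (hτ : 0 < τ) (hg : IsPiecewiseLinearInterpolant τ gs g) {M : ℝ}
    (hbdd : ∀ n, ‖gs n‖ ≤ M) {t : ℝ} (ht : 0 < t) : ‖g t‖ ≤ M := by
  rw [← mem_Ioi, ← iUnion_Ioc_nat_mul hτ, mem_iUnion] at ht
  obtain ⟨n, htn⟩ := ht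
  have htn' := Ioc_subset_Icc_self htn
  rw [hg.eq_add_smul htn']
  refine norm_add_smul_sub_le (hbdd n) (hbdd (n + 1)) ⟨?_, ?_⟩
  · exact div_nonneg (by linarith [htn'.1]) hτ.le
  · rw [div_le_one hτ]
    linarith [htn'.2]

theorem continuousOn (hg : IsPiecewiseLinearInterpolant τ gs g) (n : ℕ) :
    ContinuousOn g (Icc ((n : ℝ) * τ) (((n : ℝ) + 1) * τ)) :=
  ContinuousOn.congr (by fun_prop) (hg n)

theorem integrableOn_mul_cexp_neg (hτ : 0 < τ) (hg : IsPiecewiseLinearInterpolant τ gs g)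
    {M : ℝ} (hbdd : ∀ n, ‖gs n‖ ≤ M) {z : ℂ} (hz : 0 < z.re) :
    IntegrableOn (fun t => g t * cexp (-(z * t))) (Ioi 0) := by
  have hmeas :
      AEStronglyMeasurable (fun t => g t * cexp (-(z * t))) (volume.restrict (Ioi 0)) := by
    rw [← iUnion_Ioc_nat_mul hτ, aestronglyMeasurable_iUnion_iff]
    intro n
    exact (((hg.continuousOn n).mono Ioc_subset_Icc_self).mul (by fun_prop)).aestronglyMeasurable
      measurableSet_Ioc
  refine ((exp_neg_integrableOn_Ioi 0 hz).const_mul M).mono' hmeas ?_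
  filter_upwards [self_mem_ae_restrict measurableSet_Ioi] with t ht
  rw [norm_mul, norm_exp, neg_re, re_mul_ofReal, neg_mul]
  exact mul_le_mul_of_nonneg_right (hg.norm_le hτ hbdd ht) (Real.exp_pos _).le

theorem setIntegral_Ioc_mul_cexp_neg (hτ : 0 < τ) (hg : IsPiecewiseLinearInterpolant τ gs g)
    {z : ℂ} (hz : z ≠ 0) (n : ℕ) :
    ∫ t in Ioc ((n : ℝ) * τ) (((n : ℝ) + 1) * τ), g t * cexp (-(z * t)) =
      (1 / z - (1 - cexp (-(τ * z))) / (τ * z ^ 2)) * (gs n * cexp (-(n * τ * z))) +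
        ((cexp (τ * z) - 1) / (τ * z ^ 2) - 1 / z) *
          (gs (n + 1) * cexp (-((n + 1 : ℕ) * τ * z))) := by
  have hle : (n : ℝ) * τ ≤ (n + 1) * τ := by gcongr; linarith
  have hcell := integral_affine_mul_cexp_neg hz hτ.ne' (n * τ) (gs n) (gs (n + 1))
  push_cast at hcell
  rw [← intervalIntegral.integral_of_le hle, intervalIntegral.integral_congr fun t ht => by
    rw [hg n t (uIcc_of_le hle ▸ ht)], show ((n : ℝ) + 1) * τ = n * τ + τ by ring]
  push_cast
  rw [hcell]
  ring_nf

end IsPiecewiseLinearInterpolant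

/-- Laplace transform of the continuous piecewise linear interpolant of a bounded
sequence `gs` (with `gs 0 = 0`) on a grid of step size `τ`, for `Re z > 0`:
`∫₀^∞ g(t) e^{-zt} dt = ((e^{-τz} + e^{τz} - 2)/(z² τ)) · ∑_{n=0}^∞ gs n e^{-nτz}`. -/
theorem laplace_transform_piecewise_linear
    (τ : ℝ) (hτ : 0 < τ) (z : ℂ) (hz : 0 < z.re)
    (gs : ℕ → ℂ) (hg0 : gs 0 = 0) (M : ℝ) (hbdd : ∀ n, ‖gs n‖ ≤ M)
    (g : ℝ → ℂ)
    (hg : ∀ n : ℕ, ∀ t ∈ Set.Icc ((n : ℝ) * τ) (((n : ℝ) + 1) * τ),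
      g t = gs n + (gs (n + 1) - gs n) * ((t - (n : ℝ) * τ) / τ)) :
    ∫ t in Set.Ioi (0 : ℝ), g t * Complex.exp (-(z * t))
      = ((Complex.exp (-(τ * z)) + Complex.exp (τ * z) - 2) / (z ^ 2 * τ))
          * ∑' n : ℕ, gs n * Complex.exp (-((n : ℂ) * τ * z)) := by
  have hg : IsPiecewiseLinearInterpolant τ gs g := hg
  have hz0 : z ≠ 0 := fun h => by simp [h] at hz
  have hsum : Summable fun n : ℕ => gs n * cexp (-(n * τ * z)) := by
    simpa only [mul_assoc] using
      summable_mul_cexp_neg_nat_mul hbdd (w := τ * z) (by simpa using mul_pos hτ hz)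
  have hint := hg.integrableOn_mul_cexp_neg hτ hbdd hz
  rw [← iUnion_Ioc_nat_mul hτ] at hint ⊢
  rw [integral_iUnion (fun _ => measurableSet_Ioc) (pairwise_disjoint_Ioc_nat_mul hτ.le) hint,
    tsum_congr (hg.setIntegral_Ioc_mul_cexp_neg hτ hz0),
    tsum_mul_add_mul_succ hsum (by simp [hg0])]
  congr 1
  field_simp
  ring
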